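/- There exists a constant C > 0 such that for all r > 0 sufficiently large and all y > r + C r^{1/3}, |K_{ir}(y)| ≤ C' y^{−1/2} e^{−y} for an absolute constant C'. -/
import Mathlib


open Real MeasureTheory

/-- The modified Bessel function of the second kind of purely imaginary order `ir`,
via the integral representation `K_{ir}(y) = ∫_0^∞ e^{−y cosh t} cos(rt) dt` (real-valued). -/
noncomputable def besselK (r : ℝ) (y : ℝ) : ℝ :=
  ∫ t in Set.Ioi (0 : ℝ), Real.exp (-y * Real.cosh t) * Real.cos (r * t)

lemma cosh_ge_one_add_sq (t : ℝ) (ht : 0 ≤ t) : 1 + t ^ 2 / 2 ≤ Real.cosh t := by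
  have h1 : Real.cosh t = 1 + 2 * Real.sinh (t / 2) ^ 2 := by
    have := Real.cosh_two_mul (t / 2)
    have h2 := Real.cosh_sq (t / 2)
    rw [show 2 * (t / 2) = t by ring] at this
    rw [this, h2]; ring
  have h3 : t / 2 ≤ Real.sinh (t / 2) := Real.self_le_sinh_iff.2 (by linarith)
  have h4 : (t / 2) ^ 2 ≤ Real.sinh (t / 2) ^ 2 := by
    apply sq_le_sq' _ h3; nlinarith
  rw [h1]; nlinarith

/-- Exponential decay regime: there are constants `C, C' > 0` such that for all
sufficiently large `r` and all `y > r + C r^{1/3}`, `|K_{ir}(y)| ≤ C' y^{−1/2} e^{−y}`. -/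
theorem stmt11 :
    ∃ C C' R : ℝ, 0 < C ∧ 0 < C' ∧ 0 < R ∧
      ∀ r : ℝ, R ≤ r → ∀ y : ℝ, r + C * r ^ ((1 : ℝ) / 3) < y →
        |besselK r y| ≤ C' * y ^ (-(1 : ℝ) / 2) * Real.exp (-y) := by
  refine ⟨1, 2, 1, one_pos, two_pos, one_pos, fun r hr y hy => ?_⟩
  have hr0 : (0 : ℝ) < r := lt_of_lt_of_le one_pos hr
  have hrp : 0 < r ^ ((1 : ℝ) / 3) := Real.rpow_pos_of_pos hr0 _
  have hy0 : 0 < y := by nlinarith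
  have hb : (0 : ℝ) < y / 2 := by linarith
  -- dominating function
  set g : ℝ → ℝ := fun t => Real.exp (-y) * Real.exp (-(y / 2) * t ^ 2) with hg
  have hgi : Integrable g := (integrable_exp_neg_mul_sq hb).const_mul _
  have hbound : ∀ t ∈ Set.Ioi (0 : ℝ),
      ‖Real.exp (-y * Real.cosh t) * Real.cos (r * t)‖ ≤ g t := by
    intro t ht
    have ht0 : (0 : ℝ) ≤ t := le_of_lt ht
    have h1 : |Real.cos (r * t)| ≤ 1 := Real.abs_cos_le_one _
    have h2 : -y * Real.cosh t ≤ -y + -(y / 2) * t ^ 2 := by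
      have := cosh_ge_one_add_sq t ht0
      nlinarith
    calc ‖Real.exp (-y * Real.cosh t) * Real.cos (r * t)‖
        ≤ Real.exp (-y * Real.cosh t) := by
          rw [norm_mul, Real.norm_eq_abs, Real.norm_eq_abs,
            abs_of_pos (Real.exp_pos _)]
          exact mul_le_of_le_one_right (le_of_lt (Real.exp_pos _)) h1
      _ ≤ Real.exp (-y + -(y / 2) * t ^ 2) := Real.exp_le_exp.2 h2
      _ = g t := by rw [hg, Real.exp_add]
  have hnorm : ‖besselK r y‖ ≤ ∫ t in Set.Ioi (0 : ℝ), g t := by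
    refine norm_integral_le_of_norm_le hgi.integrableOn ?_
    filter_upwards [ae_restrict_mem measurableSet_Ioi] using hbound
  have hval : ∫ t in Set.Ioi (0 : ℝ), g t
      = Real.exp (-y) * (Real.sqrt (π / (y / 2)) / 2) := by
    rw [hg, MeasureTheory.integral_const_mul, integral_gaussian_Ioi]
  rw [Real.norm_eq_abs] at hnorm
  refine hnorm.trans ?_
  rw [hval]
  have hsq : Real.sqrt (π / (y / 2)) = Real.sqrt (2 * π) / Real.sqrt y := by
    rw [show π / (y / 2) = 2 * π / y by ring, Real.sqrt_div (by positivity)]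
  have hrpow : y ^ (-(1 : ℝ) / 2) = (Real.sqrt y)⁻¹ := by
    rw [show -(1 : ℝ) / 2 = -(1 / 2) by ring, Real.rpow_neg hy0.le,
      Real.sqrt_eq_rpow]
  have h2pi : Real.sqrt (2 * π) ≤ 3 := by
    rw [show (3 : ℝ) = Real.sqrt 9 by rw [show (9:ℝ) = 3 ^ 2 by norm_num, Real.sqrt_sq]; norm_num]
    exact Real.sqrt_le_sqrt (by nlinarith [Real.pi_le_four])
  rw [hsq, hrpow]
  have hsy : 0 < Real.sqrt y := Real.sqrt_pos.2 hy0
  have key : Real.sqrt (2 * π) / Real.sqrt y / 2 ≤ 2 * (Real.sqrt y)⁻¹ := by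
    rw [div_div, div_le_iff₀ (by positivity),
      show 2 * (Real.sqrt y)⁻¹ * (Real.sqrt y * 2)
        = 4 * ((Real.sqrt y)⁻¹ * Real.sqrt y) by ring,
      inv_mul_cancel₀ hsy.ne', mul_one]
    linarith
  calc Real.exp (-y) * (Real.sqrt (2 * π) / Real.sqrt y / 2)
      ≤ Real.exp (-y) * (2 * (Real.sqrt y)⁻¹) :=
        mul_le_mul_of_nonneg_left key (Real.exp_pos _).le
    _ = 2 * (Real.sqrt y)⁻¹ * Real.exp (-y) := by ring
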